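/- arXiv:0810.3220 — 2 statements merged into one kernel-verified Lean document; each statement's English description precedes it below -/
import Mathlib

section
/- Let V₁, V₂ be subspaces of ℂ^n and W = V₂ ∩ V₁^⊥. Then Π_{V₂}^⊥ ∘ Π_{V₁} + Π_{V₂} ∘ Π_{V₁}^⊥ = Π_{V₂ ∩ W^⊥}^⊥ ∘ Π_{W ⊕ V₁} + Π_{V₂ ∩ W^⊥} ∘ Π_{W ⊕ V₁}^⊥. -/
/-!
Write `P`, `Q`, `R` for the projections onto `V₁`, `V₂` and `W = V₂ ⊓ V₁ᗮ`. Since `W ⟂ V₁` and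
`W ≤ V₂`, the projection onto `W ⊔ V₁` is `R + P` and the one onto `V₂ ⊓ Wᗮ` is `Q - R`. Both sides
of the identity have the form `(1 - B) * A + B * (1 - A) = A + B - 2 • (B * A)`, and passing from
`(A, B) = (P, Q)` to `(R + P, Q - R)` keeps `A + B` and, because `Q R = R = R R` and `R P = 0`,
also `B * A = Q P`.
-/

noncomputable def projc {n : ℕ} (V : Submodule ℂ (EuclideanSpace ℂ (Fin n))) :
    EuclideanSpace ℂ (Fin n) →L[ℂ] EuclideanSpace ℂ (Fin n) :=
  V.subtypeL.comp V.orthogonalProjectionOnto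

theorem one_sub_mul_add_mul_one_sub_eq_of_mul_eq {A : Type*} [Ring A] {p q r : A}
    (hqr : q * r = r) (hr : IsIdempotentElem r) (hrp : r * p = 0) :
    (1 - q) * p + q * (1 - p) = (1 - (q - r)) * (r + p) + (q - r) * (1 - (r + p)) := by
  have hmul : (q - r) * (r + p) = q * p := by
    rw [sub_mul, mul_add, mul_add, hqr, hr.eq, hrp]
    abel
  rw [one_sub_mul, mul_one_sub, one_sub_mul, mul_one_sub, hmul]
  abel

namespace Submodule

variable {𝕜 E : Type*} [RCLike 𝕜] [NormedAddCommGroup E] [InnerProductSpace 𝕜 E]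

theorem starProjection_comp_starProjection_of_le' {U V : Submodule 𝕜 E}
    [U.HasOrthogonalProjection] [V.HasOrthogonalProjection] (h : U ≤ V) :
    V.starProjection ∘L U.starProjection = U.starProjection :=
  ContinuousLinearMap.ext fun x => starProjection_eq_self_iff.mpr (h (U.starProjection_apply_mem x))

theorem IsOrtho.starProjection_sup {U V : Submodule 𝕜 E} [U.HasOrthogonalProjection]
    [V.HasOrthogonalProjection] [(U ⊔ V).HasOrthogonalProjection] (h : U ⟂ V) :
    (U ⊔ V).starProjection = U.starProjection + V.starProjection := by
  ext x
  refine eq_starProjection_of_mem_orthogonal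
    (add_mem_sup (U.starProjection_apply_mem x) (V.starProjection_apply_mem x)) ?_
  rw [add_apply, ← inf_orthogonal]
  constructor
  · rw [← sub_sub]
    exact sub_mem (sub_starProjection_mem_orthogonal x) (h.symm (V.starProjection_apply_mem x))
  · rw [add_comm, ← sub_sub]
    exact sub_mem (sub_starProjection_mem_orthogonal x) (h (U.starProjection_apply_mem x))

theorem starProjection_inf_orthogonal_of_le {U V : Submodule 𝕜 E} [U.HasOrthogonalProjection]
    [V.HasOrthogonalProjection] [(V ⊓ Uᗮ).HasOrthogonalProjection] (h : U ≤ V) :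
    (V ⊓ Uᗮ).starProjection = V.starProjection - U.starProjection := by
  have hdecomp : U ⊔ (V ⊓ Uᗮ) = V := by
    rw [inf_comm]
    exact sup_orthogonal_inf_of_hasOrthogonalProjection h
  have : (U ⊔ (V ⊓ Uᗮ)).HasOrthogonalProjection := by
    rw [hdecomp]
    infer_instance
  have hortho : U ⟂ V ⊓ Uᗮ := (isOrtho_orthogonal_right U).mono_right inf_le_right
  have hsum := hortho.starProjection_sup
  simp only [hdecomp] at hsum
  rw [hsum]
  abel

end Submodule

theorem proj_mixed_comp_eq {n : ℕ} (V₁ V₂ : Submodule ℂ (EuclideanSpace ℂ (Fin n))) :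
    (1 - projc V₂).comp (projc V₁) + (projc V₂).comp (1 - projc V₁)
      = (1 - projc (V₂ ⊓ (V₂ ⊓ V₁ᗮ)ᗮ)).comp (projc ((V₂ ⊓ V₁ᗮ) ⊔ V₁))
        + (projc (V₂ ⊓ (V₂ ⊓ V₁ᗮ)ᗮ)).comp (1 - projc ((V₂ ⊓ V₁ᗮ) ⊔ V₁)) := by
  set W := V₂ ⊓ V₁ᗮ
  have hWV₂ : W ≤ V₂ := inf_le_left
  have hWV₁ : W ⟂ V₁ := inf_le_right
  change (1 - V₂.starProjection) * V₁.starProjection + V₂.starProjection * (1 - V₁.starProjection)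
    = (1 - (V₂ ⊓ Wᗮ).starProjection) * (W ⊔ V₁).starProjection
      + (V₂ ⊓ Wᗮ).starProjection * (1 - (W ⊔ V₁).starProjection)
  rw [hWV₁.starProjection_sup, Submodule.starProjection_inf_orthogonal_of_le hWV₂]
  exact one_sub_mul_add_mul_one_sub_eq_of_mul_eq
    (Submodule.starProjection_comp_starProjection_of_le' hWV₂)
    W.isIdempotentElem_starProjection hWV₁.starProjection_comp_starProjection
end

section
/- Let φ(z) be holomorphic near 0 with values in n×n matrices, with φ(0) ≠ 0 as a matrix but det φ(0) = 0, and set V = ker φ(0). Then ψ(z) := φ(z) ∘ T_V(z)⁻¹ (defined for z ≠ 0) extends holomorphically across 0, ψ(0) is injective on V^⊥, and ord₀(det ψ) = ord₀(det φ) − dim V. -/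
open scoped Topology

noncomputable def Tc {n : ℕ} (V : Submodule ℂ (EuclideanSpace ℂ (Fin n))) (z : ℂ) :
    EuclideanSpace ℂ (Fin n) →L[ℂ] EuclideanSpace ℂ (Fin n) :=
  z • projc V + (1 - projc V)

/-!
Since `φ 0` vanishes on `V`, the map `ψ z = (dslope φ 0 z) Π_V + φ z Π_V^⊥` is analytic, agrees
with `φ z T_V(z)⁻¹` for `z ≠ 0`, and satisfies `ψ z T_V(z) = φ z` for every `z`, because
`z • dslope φ 0 z = φ z - φ 0`. On `V^⊥` the value `ψ 0` is just `φ 0`, whose kernel is `V`.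
Finally `det T_V(z) = z ^ dim V`, so `det φ z = z ^ dim V * det ψ z`.
-/

theorem LinearMap.det_eq_pow_finrank_of_isCompl {K M : Type*} [Field K] [AddCommGroup M]
    [Module K M] [FiniteDimensional K M] {p q : Submodule K M} (hpq : IsCompl p q)
    (f : M →ₗ[K] M) (a : K) (hp : ∀ x ∈ p, f x = a • x) (hq : ∀ x ∈ q, f x = x) :
    LinearMap.det f = a ^ Module.finrank K p := by
  let e := Submodule.prodEquivOfIsCompl p q hpq
  let g : p × q →ₗ[K] p × q := (a • LinearMap.id).prodMap LinearMap.id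
  have hfe : f ∘ₗ (e : p × q →ₗ[K] M) = (e : p × q →ₗ[K] M) ∘ₗ g := by
    ext x <;> simp [e, g, hp, hq]
  have hf : f = (e : p × q →ₗ[K] M) ∘ₗ g ∘ₗ (e.symm : M →ₗ[K] p × q) :=
    LinearMap.ext fun x => by simpa using congr($hfe (e.symm x))
  rw [hf, LinearMap.det_conj, LinearMap.det_prodMap, LinearMap.det_smul]
  simp

theorem AnalyticAt.det {𝕜 F E : Type*} [NontriviallyNormedField 𝕜] [CompleteSpace 𝕜]
    [NormedAddCommGroup F] [NormedSpace 𝕜 F] [NormedAddCommGroup E] [NormedSpace 𝕜 E]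
    [FiniteDimensional 𝕜 E] {A : F → E →L[𝕜] E} {x : F} (hA : AnalyticAt 𝕜 A x) :
    AnalyticAt 𝕜 (fun y => LinearMap.det (A y : E →ₗ[𝕜] E)) x := by
  classical
  let b := Module.finBasis 𝕜 E
  have hentry : ∀ i j, AnalyticAt 𝕜 (fun y => LinearMap.toMatrix b b (A y) i j) x := fun i j =>
    let ℓ : (E →L[𝕜] E) →ₗ[𝕜] 𝕜 := Matrix.entryLinearMap 𝕜 𝕜 i j ∘ₗ
      (LinearMap.toMatrix b b).toLinearMap ∘ₗ ContinuousLinearMap.coeLM 𝕜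
    (LinearMap.toContinuousLinearMap ℓ).analyticAt _ |>.comp hA
  simp_rw [← LinearMap.det_toMatrix b, Matrix.det_apply']
  exact Finset.analyticAt_fun_sum _ fun σ _ =>
    analyticAt_const.mul (Finset.analyticAt_fun_prod _ fun i _ => hentry _ _)

section StripFactor

variable {𝕜 E : Type*} [NontriviallyNormedField 𝕜] [NormedAddCommGroup E] [NormedSpace 𝕜 E]

noncomputable def stripFactor (φ : 𝕜 → E →L[𝕜] E) (P : E →L[𝕜] E) (z : 𝕜) : E →L[𝕜] E :=
  dslope φ 0 z ∘L P + φ z ∘L (1 - P)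

variable {φ : 𝕜 → E →L[𝕜] E} {P : E →L[𝕜] E}

theorem AnalyticAt.stripFactor (hφ : AnalyticAt 𝕜 φ 0) : AnalyticAt 𝕜 (stripFactor φ P) 0 := by
  obtain ⟨p, hp⟩ := hφ
  have hdslope : AnalyticAt 𝕜 (dslope φ 0) 0 := ⟨p.fslope, hp.has_fpower_series_dslope_fslope⟩
  exact ((ContinuousLinearMap.compL 𝕜 E E E).flip P).analyticAt _ |>.comp hdslope |>.add <|
    ((ContinuousLinearMap.compL 𝕜 E E E).flip (1 - P)).analyticAt _ |>.comp ⟨p, hp⟩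

theorem stripFactor_comp (hP : IsIdempotentElem P) (hφP : φ 0 ∘L P = 0) (z : 𝕜) :
    stripFactor φ P z ∘L (z • P + (1 - P)) = φ z := by
  have hslope : z • dslope φ 0 z = φ z - φ 0 := by simpa using sub_smul_dslope φ 0 z
  simp only [stripFactor, ← ContinuousLinearMap.mul_def] at hφP ⊢
  calc (dslope φ 0 z * P + φ z * (1 - P)) * (z • P + (1 - P))
      = (z • dslope φ 0 z) * P + φ z * (1 - P) := by
        simp only [add_mul, mul_add, mul_assoc, mul_smul_comm, smul_mul_assoc, hP.eq,
          hP.mul_one_sub_self, hP.one_sub.eq, hP.one_sub_mul_self, mul_zero, add_zero, zero_add]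
    _ = φ z := by rw [hslope, sub_mul, hφP, sub_zero, ← mul_add, add_sub_cancel, mul_one]

theorem stripFactor_eq_comp_inv (hP : IsIdempotentElem P) (hφP : φ 0 ∘L P = 0) {z : 𝕜}
    (hz : z ≠ 0) : stripFactor φ P z = φ z ∘L (z⁻¹ • P + (1 - P)) := by
  have hinv : (z • P + (1 - P)) * (z⁻¹ • P + (1 - P)) = 1 := by
    simp only [add_mul, mul_add, mul_smul_comm, smul_mul_assoc, hP.eq, hP.mul_one_sub_self,
      hP.one_sub.eq, hP.one_sub_mul_self, smul_smul, inv_mul_cancel₀ hz, one_smul, smul_zero,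
      add_zero, zero_add, add_sub_cancel]
  rw [← stripFactor_comp hP hφP z]
  simp only [← ContinuousLinearMap.mul_def]
  rw [mul_assoc, hinv, mul_one]

theorem stripFactor_zero_apply_of_apply_eq_zero {x : E} (hx : P x = 0) :
    stripFactor φ P 0 x = φ 0 x := by
  simp [stripFactor, hx]

end StripFactor

theorem analyticOrderAt_pow_mul {𝕜 : Type*} [NontriviallyNormedField 𝕜] {f : 𝕜 → 𝕜}
    (hf : AnalyticAt 𝕜 f 0) (d : ℕ) :
    analyticOrderAt (fun z => z ^ d * f z) 0 = d + analyticOrderAt f 0 := by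
  have h := analyticOrderAt_mul (f := (· - 0) ^ d) (by fun_prop) hf
  rw [analyticOrderAt_centeredMonomial] at h
  convert h using 2
  ext z
  simp

section Euclidean

variable {n : ℕ} (V : Submodule ℂ (EuclideanSpace ℂ (Fin n)))

theorem projc_eq_starProjection : projc V = V.starProjection := rfl

theorem isIdempotentElem_projc : IsIdempotentElem (projc V) := V.isIdempotentElem_starProjection

theorem det_Tc (z : ℂ) :
    LinearMap.det (Tc V z : EuclideanSpace ℂ (Fin n) →ₗ[ℂ] EuclideanSpace ℂ (Fin n)) =
      z ^ Module.finrank ℂ V := by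
  refine LinearMap.det_eq_pow_finrank_of_isCompl V.isCompl_orthogonal
    _ z (fun x hx => ?_) (fun x hx => ?_)
  · simp [Tc, projc_eq_starProjection, V.starProjection_eq_self_iff.mpr hx]
  · simp [Tc, projc_eq_starProjection, V.starProjection_apply_eq_zero_iff.mpr hx]

theorem det_eq_pow_mul_det_stripFactor
    {φ : ℂ → EuclideanSpace ℂ (Fin n) →L[ℂ] EuclideanSpace ℂ (Fin n)} (hφP : φ 0 ∘L projc V = 0)
    (z : ℂ) :
    LinearMap.det (φ z : EuclideanSpace ℂ (Fin n) →ₗ[ℂ] EuclideanSpace ℂ (Fin n)) =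
      z ^ Module.finrank ℂ V *
        LinearMap.det
          (stripFactor φ (projc V) z : EuclideanSpace ℂ (Fin n) →ₗ[ℂ] EuclideanSpace ℂ (Fin n)) := by
  have hcomp : stripFactor φ (projc V) z ∘L Tc V z = φ z := stripFactor_comp (isIdempotentElem_projc V) hφP z
  rw [← hcomp, ContinuousLinearMap.toLinearMap_comp, LinearMap.det_comp, det_Tc, mul_comm]

end Euclidean

theorem strip_elementary_factor_general {n : ℕ}
    (φ : ℂ → (EuclideanSpace ℂ (Fin n) →L[ℂ] EuclideanSpace ℂ (Fin n)))
    (hφ : AnalyticAt ℂ φ 0) :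
    ∃ ψ : ℂ → (EuclideanSpace ℂ (Fin n) →L[ℂ] EuclideanSpace ℂ (Fin n)),
      AnalyticAt ℂ ψ 0 ∧
      (∀ᶠ z in 𝓝[≠] (0 : ℂ), ψ z
        = (φ z).comp (z⁻¹ • projc (LinearMap.ker (φ 0 : EuclideanSpace ℂ (Fin n) →ₗ[ℂ] EuclideanSpace ℂ (Fin n)))
            + (1 - projc (LinearMap.ker (φ 0 : EuclideanSpace ℂ (Fin n) →ₗ[ℂ] EuclideanSpace ℂ (Fin n)))))) ∧
      (∀ x ∈ (LinearMap.ker (φ 0 : EuclideanSpace ℂ (Fin n) →ₗ[ℂ] EuclideanSpace ℂ (Fin n)))ᗮ, ψ 0 x = 0 → x = 0) ∧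
      ∃ (hdφ : AnalyticAt ℂ (fun z => LinearMap.det
            ((φ z : EuclideanSpace ℂ (Fin n) →L[ℂ] EuclideanSpace ℂ (Fin n)) :
              EuclideanSpace ℂ (Fin n) →ₗ[ℂ] EuclideanSpace ℂ (Fin n))) 0)
        (hdψ : AnalyticAt ℂ (fun z => LinearMap.det
            ((ψ z : EuclideanSpace ℂ (Fin n) →L[ℂ] EuclideanSpace ℂ (Fin n)) :
              EuclideanSpace ℂ (Fin n) →ₗ[ℂ] EuclideanSpace ℂ (Fin n))) 0),
        analyticOrderAt (fun z => LinearMap.det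
            ((ψ z : EuclideanSpace ℂ (Fin n) →L[ℂ] EuclideanSpace ℂ (Fin n)) :
              EuclideanSpace ℂ (Fin n) →ₗ[ℂ] EuclideanSpace ℂ (Fin n))) 0
          + ((Module.finrank ℂ (LinearMap.ker (φ 0 : EuclideanSpace ℂ (Fin n) →ₗ[ℂ] EuclideanSpace ℂ (Fin n))) : ℕ) : ℕ∞)
          = analyticOrderAt (fun z => LinearMap.det
            ((φ z : EuclideanSpace ℂ (Fin n) →L[ℂ] EuclideanSpace ℂ (Fin n)) :
              EuclideanSpace ℂ (Fin n) →ₗ[ℂ] EuclideanSpace ℂ (Fin n))) 0 := by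
  set V := LinearMap.ker (φ 0 : EuclideanSpace ℂ (Fin n) →ₗ[ℂ] EuclideanSpace ℂ (Fin n))
  have hφP : φ 0 ∘L projc V = 0 :=
    ContinuousLinearMap.ext fun x => LinearMap.mem_ker.mp (V.starProjection_apply_mem x)
  have hψ := hφ.stripFactor (P := projc V)
  refine ⟨stripFactor φ (projc V), hψ, ?_, fun x hx hψx => ?_, hφ.det, hψ.det, ?_⟩
  · filter_upwards [self_mem_nhdsWithin] with z hz using stripFactor_eq_comp_inv (isIdempotentElem_projc V) hφP hz
  · rw [stripFactor_zero_apply_of_apply_eq_zero (P := projc V)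
      (V.starProjection_apply_eq_zero_iff.mpr hx)] at hψx
    exact (Submodule.mem_bot ℂ).mp (V.inf_orthogonal_eq_bot ▸ ⟨hψx, hx⟩)
  · rw [funext (det_eq_pow_mul_det_stripFactor V hφP), analyticOrderAt_pow_mul hψ.det, add_comm]

/-- Stripping one elementary factor: if phi(0) is nonzero but singular and V = ker phi(0),
then psi(z) = phi(z) T_V(z)^{-1} extends holomorphically across 0, psi(0) is injective
on the orthogonal complement of V, and the order of det psi at 0 is that of det phi
minus dim V. -/
theorem strip_elementary_factor {n : ℕ}
    (φ : ℂ → (EuclideanSpace ℂ (Fin n) →L[ℂ] EuclideanSpace ℂ (Fin n)))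
    (hφ : AnalyticAt ℂ φ 0) (hφ0 : φ 0 ≠ 0)
    (hdet0 : LinearMap.det
      ((φ 0 : EuclideanSpace ℂ (Fin n) →L[ℂ] EuclideanSpace ℂ (Fin n)) :
        EuclideanSpace ℂ (Fin n) →ₗ[ℂ] EuclideanSpace ℂ (Fin n)) = 0) :
    ∃ ψ : ℂ → (EuclideanSpace ℂ (Fin n) →L[ℂ] EuclideanSpace ℂ (Fin n)),
      AnalyticAt ℂ ψ 0 ∧
      (∀ᶠ z in 𝓝[≠] (0 : ℂ), ψ z
        = (φ z).comp (z⁻¹ • projc (LinearMap.ker (φ 0 : EuclideanSpace ℂ (Fin n) →ₗ[ℂ] EuclideanSpace ℂ (Fin n)))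
            + (1 - projc (LinearMap.ker (φ 0 : EuclideanSpace ℂ (Fin n) →ₗ[ℂ] EuclideanSpace ℂ (Fin n)))))) ∧
      (∀ x ∈ (LinearMap.ker (φ 0 : EuclideanSpace ℂ (Fin n) →ₗ[ℂ] EuclideanSpace ℂ (Fin n)))ᗮ, ψ 0 x = 0 → x = 0) ∧
      ∃ (hdφ : AnalyticAt ℂ (fun z => LinearMap.det
            ((φ z : EuclideanSpace ℂ (Fin n) →L[ℂ] EuclideanSpace ℂ (Fin n)) :
              EuclideanSpace ℂ (Fin n) →ₗ[ℂ] EuclideanSpace ℂ (Fin n))) 0)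
        (hdψ : AnalyticAt ℂ (fun z => LinearMap.det
            ((ψ z : EuclideanSpace ℂ (Fin n) →L[ℂ] EuclideanSpace ℂ (Fin n)) :
              EuclideanSpace ℂ (Fin n) →ₗ[ℂ] EuclideanSpace ℂ (Fin n))) 0),
        analyticOrderAt (fun z => LinearMap.det
            ((ψ z : EuclideanSpace ℂ (Fin n) →L[ℂ] EuclideanSpace ℂ (Fin n)) :
              EuclideanSpace ℂ (Fin n) →ₗ[ℂ] EuclideanSpace ℂ (Fin n))) 0
          + ((Module.finrank ℂ (LinearMap.ker (φ 0 : EuclideanSpace ℂ (Fin n) →ₗ[ℂ] EuclideanSpace ℂ (Fin n))) : ℕ) : ℕ∞)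
          = analyticOrderAt (fun z => LinearMap.det
            ((φ z : EuclideanSpace ℂ (Fin n) →L[ℂ] EuclideanSpace ℂ (Fin n)) :
              EuclideanSpace ℂ (Fin n) →ₗ[ℂ] EuclideanSpace ℂ (Fin n))) 0 :=
  strip_elementary_factor_general φ hφ
end
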